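/- arXiv:2409.19360 — 2 statements merged into one kernel-verified Lean document; each statement's English description precedes it below -/
import Mathlib

section
/- If Q is obtained from P by a sequence of (C,S)-solitaire moves, then Q ⊆ φ(P) and φ(Q) = φ(P); i.e., the solitaire process preserves the filling closure. -/
open scoped symmDiff

/-- The left translate `gS` of a finite shape `S` in a group `G`. -/
def gset {G : Type*} [Group G] (g : G) (S : Finset G) : Set G :=
  (fun s => g * s) '' (S : Set G)

/-- A `(C,S)`-filling move: `P ⊊ Q`, some translate `gS` meets `P` in exactly
`|S| - 1` elements, and `Q = P ∪ gC`. -/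
def FillMove {G : Type*} [Group G] (C S : Finset G) (P Q : Set G) : Prop :=
  P ⊂ Q ∧ ∃ g : G, (P ∩ gset g S).ncard = S.card - 1 ∧ Q = P ∪ gset g C

/-- The `(C,S)`-filling closure: the union of all sets reachable from `P` by
finitely many filling moves. -/
def fillClosure {G : Type*} [Group G] (C S : Finset G) (P : Set G) : Set G :=
  {x | ∃ Q : Set G, Relation.ReflTransGen (FillMove C S) P Q ∧ x ∈ Q}

/-- A `(C,S)`-solitaire move: for some `g`, both `P` and `Q` meet `gS` in
exactly `|S| - 1` elements, and `P △ Q` is a 2-element subset of `gC`. -/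
def SolMove {G : Type*} [Group G] (C S : Finset G) (P Q : Set G) : Prop :=
  ∃ g : G, (P ∩ gset g S).ncard = S.card - 1 ∧ (Q ∩ gset g S).ncard = S.card - 1 ∧
    (P ∆ Q) ⊆ gset g C ∧ (P ∆ Q).ncard = 2

/-!
A filling move only enlarges a set, and it can be replayed on any superset (the superset either
already contains `gC` or still misses exactly one point of `gS`), so `φ` is monotone and unchanged
by a filling move. In a solitaire move `P → Q` the two sets meet `gS` equally often and differ only
inside `gS`, so each misses a point of `gC` that the other contains. Hence `P → P ∪ gC` and
`Q → Q ∪ gC` are filling moves, and `P ∪ gC = Q ∪ gC` because `P △ Q ⊆ gC`; so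
`φ(P) = φ(P ∪ gC) = φ(Q)`.
-/

section Counting

variable {α : Type*} {P Q X X' T : Set α}

lemma Set.diff_nonempty_of_ncard_inter_eq (hT : T.Finite)
    (hcard : (P ∩ T).ncard = (Q ∩ T).ncard) (hsub : P ∆ Q ⊆ T) (hne : (P ∆ Q).Nonempty) :
    (Q \ P).Nonempty := by
  by_contra hQP
  have hQP : Q ⊆ P := Set.sdiff_eq_empty.mp (Set.not_nonempty_iff_eq_empty.mp hQP)
  have hPQ : P ∩ T = Q ∩ T :=
    (Set.eq_of_subset_of_ncard_le (Set.inter_subset_inter_left T hQP) hcard.le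
      (hT.subset Set.inter_subset_right)).symm
  obtain ⟨x, hx⟩ := hne
  rcases Set.mem_symmDiff.mp hx with ⟨hxP, hxQ⟩ | ⟨hxQ, hxP⟩
  · exact hxQ (hPQ ▸ ⟨hxP, hsub hx⟩ : x ∈ Q ∩ T).1
  · exact hxP (hQP hxQ)

lemma ncard_inter_eq_of_subset_of_mem_diff (hT : T.Finite) (hXX' : X ⊆ X')
    (hX : (X ∩ T).ncard = T.ncard - 1) {c : α} (hc : c ∈ T \ X') :
    (X' ∩ T).ncard = T.ncard - 1 := by
  have hle : (X ∩ T).ncard ≤ (X' ∩ T).ncard :=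
    Set.ncard_le_ncard (Set.inter_subset_inter_left T hXX') (hT.subset Set.inter_subset_right)
  have hlt : (X' ∩ T).ncard < T.ncard :=
    Set.ncard_lt_ncard ⟨Set.inter_subset_right, fun h => hc.2 (h hc.1).1⟩ hT
  omega

lemma union_eq_union_of_symmDiff_subset (h : P ∆ Q ⊆ T) : P ∪ T = Q ∪ T :=
  have ⟨hP, hQ⟩ := symmDiff_le_iff.mp h
  le_antisymm (sup_le hP le_sup_right) (sup_le hQ le_sup_right)

end Counting

section Solitaire

variable {G : Type*} [Group G] {C S : Finset G} {P Q R : Set G} {g : G}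

lemma gset_finite (g : G) (S : Finset G) : (gset g S).Finite :=
  S.finite_toSet.image _

lemma ncard_gset (g : G) (S : Finset G) : (gset g S).ncard = S.card := by
  rw [gset, Set.ncard_image_of_injective _ (mul_right_injective g), Set.ncard_coe_finset]

lemma gset_mono (g : G) (h : C ⊆ S) : gset g C ⊆ gset g S :=
  Set.image_mono (Finset.coe_subset.mpr h)

lemma fillMove_union (hP : (P ∩ gset g S).ncard = S.card - 1) (hC : ¬ gset g C ⊆ P) :
    FillMove C S P (P ∪ gset g C) :=
  ⟨Set.ssubset_union_left_iff.mpr hC, g, hP, rfl⟩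

lemma subset_fillClosure (C S : Finset G) (P : Set G) : P ⊆ fillClosure C S P :=
  fun _ hx => ⟨P, .refl, hx⟩

lemma exists_fillMove_chain_superset (hCS : C ⊆ S) {P' X : Set G} (hPP' : P ⊆ P')
    (h : Relation.ReflTransGen (FillMove C S) P X) :
    ∃ X', Relation.ReflTransGen (FillMove C S) P' X' ∧ X ⊆ X' := by
  induction h with
  | refl => exact ⟨P', .refl, hPP'⟩
  | tail _ hmove ih =>
    obtain ⟨X', hX', hXX'⟩ := ih
    obtain ⟨-, g, hcard, rfl⟩ := hmove
    by_cases hC : gset g C ⊆ X'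
    · exact ⟨X', hX', Set.union_subset hXX' hC⟩
    obtain ⟨c, hcC, hcX'⟩ := Set.not_subset.mp hC
    have hcard' : (X' ∩ gset g S).ncard = S.card - 1 := by
      rw [← ncard_gset g S] at hcard ⊢
      exact ncard_inter_eq_of_subset_of_mem_diff (gset_finite g S) hXX' hcard
        ⟨gset_mono g hCS hcC, hcX'⟩
    exact ⟨X' ∪ gset g C, hX'.tail (fillMove_union hcard' hC),
      Set.union_subset_union_left _ hXX'⟩

lemma fillClosure_mono (hCS : C ⊆ S) {P' : Set G} (hPP' : P ⊆ P') :
    fillClosure C S P ⊆ fillClosure C S P' := by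
  rintro x ⟨X, hX, hx⟩
  obtain ⟨X', hX', hXX'⟩ := exists_fillMove_chain_superset hCS hPP' hX
  exact ⟨X', hX', hXX' hx⟩

lemma FillMove.fillClosure_eq (hCS : C ⊆ S) (h : FillMove C S P R) :
    fillClosure C S R = fillClosure C S P := by
  refine (fillClosure_mono hCS h.1.subset).antisymm' ?_
  rintro x ⟨X, hX, hx⟩
  exact ⟨X, hX.head h, hx⟩

lemma SolMove.fillClosure_eq (hCS : C ⊆ S) (h : SolMove C S P Q) :
    fillClosure C S Q = fillClosure C S P := by
  obtain ⟨g, hP, hQ, hsub, htwo⟩ := h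
  have hsubS : P ∆ Q ⊆ gset g S := hsub.trans (gset_mono g hCS)
  have hne : (P ∆ Q).Nonempty := Set.nonempty_of_ncard_ne_zero (by omega)
  have missing_point {A B : Set G} (hA : (A ∩ gset g S).ncard = S.card - 1)
      (hB : (B ∩ gset g S).ncard = S.card - 1) (hAB : A ∆ B = P ∆ Q) : ¬ gset g C ⊆ A := by
    obtain ⟨b, hbB, hbA⟩ := Set.diff_nonempty_of_ncard_inter_eq (gset_finite g S)
      (hA.trans hB.symm) (hAB ▸ hsubS) (hAB ▸ hne)
    exact fun hCA => hbA (hCA (hsub (hAB ▸ Set.mem_symmDiff.mpr (Or.inr ⟨hbB, hbA⟩))))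
  have hPQ := union_eq_union_of_symmDiff_subset hsub
  rw [← (fillMove_union hQ (missing_point hQ hP (symmDiff_comm Q P))).fillClosure_eq hCS,
    ← (fillMove_union hP (missing_point hP hQ rfl)).fillClosure_eq hCS, hPQ]

end Solitaire

/-- The solitaire process preserves the filling closure: if `Q` is reachable from
`P` by solitaire moves, then `Q ⊆ φ(P)` and `φ(Q) = φ(P)`. -/
theorem solitaire_preserves_fillClosure {G : Type*} [Group G] (C S : Finset G)
    (hCS : C ⊆ S) (P Q : Set G)
    (h : Relation.ReflTransGen (SolMove C S) P Q) :
    Q ⊆ fillClosure C S P ∧ fillClosure C S Q = fillClosure C S P := by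
  have hφ : fillClosure C S Q = fillClosure C S P := by
    induction h with
    | refl => rfl
    | tail _ hmove ih => exact (hmove.fillClosure_eq hCS).trans ih
  exact ⟨hφ ▸ subset_fillClosure C S Q, hφ⟩
end

section
/- For triangle solitaire on ℤ², any two distinct edges of T_n are at distance Ω(n²) in the orbit graph: transforming one edge of T_n into another requires at least n(n-1)/2 solitaire moves. -/
open scoped symmDiff

/-- The triangle shape `T = {(0,0),(1,0),(0,1)}` in `ℤ²`. -/
def TriShape : Set (ℤ × ℤ) := {(0,0), (1,0), (0,1)}

/-- The translate `v + A` of a set `A ⊆ ℤ²`. -/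
def tr (v : ℤ × ℤ) (A : Set (ℤ × ℤ)) : Set (ℤ × ℤ) := (fun p => v + p) '' A

/-- A triangle solitaire move: for some `v`, both `P` and `Q` meet `v + T` in
exactly 2 elements and `P △ Q` is a 2-element subset of `v + T`. -/
def TriMove (P Q : Set (ℤ × ℤ)) : Prop :=
  ∃ v : ℤ × ℤ, (P ∩ tr v TriShape).ncard = 2 ∧ (Q ∩ tr v TriShape).ncard = 2 ∧
    (P ∆ Q) ⊆ tr v TriShape ∧ (P ∆ Q).ncard = 2

/-- The triangle `T_n = {(a,b) : a,b ≥ 0, a + b ≤ n - 1}`. -/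
def TnSet (n : ℕ) : Set (ℤ × ℤ) :=
  {p | 0 ≤ p.1 ∧ 0 ≤ p.2 ∧ p.1 + p.2 < (n : ℤ)}

/-- The horizontal edge `{0,…,n-1} × {0}` of `T_n`. -/
def horizEdge (n : ℕ) : Set (ℤ × ℤ) := {p | 0 ≤ p.1 ∧ p.1 < (n : ℤ) ∧ p.2 = 0}

/-- The vertical edge `{0} × {0,…,n-1}` of `T_n`. -/
def vertEdge (n : ℕ) : Set (ℤ × ℤ) := {p | p.1 = 0 ∧ 0 ≤ p.2 ∧ p.2 < (n : ℤ)}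

/-- The diagonal edge `{(i, n-1-i) : 0 ≤ i ≤ n-1}` of `T_n`. -/
def diagEdge (n : ℕ) : Set (ℤ × ℤ) :=
  {p | 0 ≤ p.1 ∧ 0 ≤ p.2 ∧ p.1 + p.2 = (n : ℤ) - 1}

/- ### Auxiliary development -/

noncomputable def chi (A : Set (ℤ × ℤ)) (x : ℤ × ℤ) : ℤ :=
  @ite _ (x ∈ A) (Classical.dec _) 1 0

noncomputable def phi (w : ℤ × ℤ → ℤ) (A R : Set (ℤ × ℤ)) : ℤ :=
  ∑ᶠ x, w x * (chi A x - chi R x)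

lemma support_chi_sub (w : ℤ × ℤ → ℤ) (A R : Set (ℤ × ℤ)) :
    Function.support (fun x => w x * (chi A x - chi R x)) ⊆ A ∆ R := by
  intro x hx
  simp only [Function.mem_support, ne_eq] at hx
  rw [Set.mem_symmDiff]
  by_contra h
  push_neg at h
  apply hx
  have : chi A x = chi R x := by
    unfold chi
    by_cases hA : x ∈ A
    · rw [if_pos hA, if_pos (by tauto)]
    · rw [if_neg hA, if_neg (by tauto)]
  rw [this]; ring

lemma support_chi (w : ℤ × ℤ → ℤ) (A : Set (ℤ × ℤ)) :
    Function.support (fun x => w x * chi A x) ⊆ A := by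
  intro x hx
  simp only [Function.mem_support, ne_eq] at hx
  by_contra hA
  exact hx (by simp [chi, if_neg hA])

lemma tr_finite (v : ℤ × ℤ) : (tr v TriShape).Finite := by
  have h : TriShape.Finite := by unfold TriShape; exact Set.toFinite _
  exact h.image _

lemma trimove_spec {P Q : Set (ℤ × ℤ)} (h : TriMove P Q) :
    ∃ v p q, p ≠ q ∧ P ∆ Q = {p, q} ∧ p ∈ P ∧ p ∉ Q ∧ q ∈ Q ∧ q ∉ P ∧
      p ∈ tr v TriShape ∧ q ∈ tr v TriShape := by
  obtain ⟨v, hP2, hQ2, hsub, hc⟩ := h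
  obtain ⟨p, q, hpq, hset⟩ := Set.ncard_eq_two.mp hc
  have hpT : p ∈ tr v TriShape := hsub (by simp [hset])
  have hqT : q ∈ tr v TriShape := hsub (by simp [hset])
  have hp : p ∈ P ∆ Q := by simp [hset]
  have hq : q ∈ P ∆ Q := by simp [hset]
  rw [Set.mem_symmDiff] at hp hq
  rcases hp with ⟨hpP, hpQ⟩ | ⟨hpQ, hpP⟩ <;> rcases hq with ⟨hqP, hqQ⟩ | ⟨hqQ, hqP⟩
  · exfalso
    have hPeq : P ∩ tr v TriShape = {p, q} := by
      obtain ⟨a, b, hab, he⟩ := Set.ncard_eq_two.mp hP2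
      have hp' : p ∈ ({a, b} : Set (ℤ × ℤ)) := he ▸ ⟨hpP, hpT⟩
      have hq' : q ∈ ({a, b} : Set (ℤ × ℤ)) := he ▸ ⟨hqP, hqT⟩
      rw [he]
      simp only [Set.mem_insert_iff, Set.mem_singleton_iff] at hp' hq'
      rcases hp' with rfl | rfl <;> rcases hq' with rfl | rfl <;>
        first
          | exact absurd rfl hpq
          | rfl
          | exact Set.pair_comm _ _
    have hQempty : Q ∩ tr v TriShape = ∅ := by
      ext x
      simp only [Set.mem_inter_iff, Set.mem_empty_iff_false, iff_false, not_and]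
      intro hxQ hxT
      by_cases hxP : x ∈ P
      · have hx : x ∈ ({p, q} : Set (ℤ × ℤ)) := hPeq ▸ ⟨hxP, hxT⟩
        simp only [Set.mem_insert_iff, Set.mem_singleton_iff] at hx
        rcases hx with rfl | rfl
        · exact hpQ hxQ
        · exact hqQ hxQ
      · have hx : x ∈ P ∆ Q := Set.mem_symmDiff.mpr (Or.inr ⟨hxQ, hxP⟩)
        rw [hset] at hx
        simp only [Set.mem_insert_iff, Set.mem_singleton_iff] at hx
        rcases hx with rfl | rfl
        · exact hxP hpP
        · exact hxP hqP
    rw [hQempty] at hQ2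
    simp at hQ2
  · exact ⟨v, p, q, hpq, hset, hpP, hpQ, hqQ, hqP, hpT, hqT⟩
  · exact ⟨v, q, p, hpq.symm, hset.trans (Set.pair_comm p q), hqP, hqQ, hpQ, hpP, hqT, hpT⟩
  · exfalso
    have hQeq : Q ∩ tr v TriShape = {p, q} := by
      obtain ⟨a, b, hab, he⟩ := Set.ncard_eq_two.mp hQ2
      have hp' : p ∈ ({a, b} : Set (ℤ × ℤ)) := he ▸ ⟨hpQ, hpT⟩
      have hq' : q ∈ ({a, b} : Set (ℤ × ℤ)) := he ▸ ⟨hqQ, hqT⟩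
      rw [he]
      simp only [Set.mem_insert_iff, Set.mem_singleton_iff] at hp' hq'
      rcases hp' with rfl | rfl <;> rcases hq' with rfl | rfl <;>
        first
          | exact absurd rfl hpq
          | rfl
          | exact Set.pair_comm _ _
    have hPempty : P ∩ tr v TriShape = ∅ := by
      ext x
      simp only [Set.mem_inter_iff, Set.mem_empty_iff_false, iff_false, not_and]
      intro hxP hxT
      by_cases hxQ : x ∈ Q
      · have hx : x ∈ ({p, q} : Set (ℤ × ℤ)) := hQeq ▸ ⟨hxQ, hxT⟩
        simp only [Set.mem_insert_iff, Set.mem_singleton_iff] at hx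
        rcases hx with rfl | rfl
        · exact hpP hxP
        · exact hqP hxP
      · have hx : x ∈ P ∆ Q := Set.mem_symmDiff.mpr (Or.inl ⟨hxP, hxQ⟩)
        rw [hset] at hx
        simp only [Set.mem_insert_iff, Set.mem_singleton_iff] at hx
        rcases hx with rfl | rfl
        · exact hxQ hpQ
        · exact hxQ hqQ
    rw [hPempty] at hP2
    simp at hP2

lemma phi_move (w : ℤ × ℤ → ℤ)
    (hw : ∀ v : ℤ × ℤ, ∀ p ∈ tr v TriShape, ∀ q ∈ tr v TriShape, |w p - w q| ≤ 1)
    {P Q R : Set (ℤ × ℤ)} (hPR : (P ∆ R).Finite) (hQR : (Q ∆ R).Finite)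
    (h : TriMove P Q) : |phi w Q R - phi w P R| ≤ 1 := by
  obtain ⟨v, p, q, hpq, hset, hpP, hpQ, hqQ, hqP, hpT, hqT⟩ := trimove_spec h
  have key : phi w Q R - phi w P R = w q - w p := by
    unfold phi
    rw [← finsum_sub_distrib (hQR.subset (support_chi_sub w Q R))
      (hPR.subset (support_chi_sub w P R))]
    have h1 : ∀ x, (w x * (chi Q x - chi R x) - w x * (chi P x - chi R x))
        = w x * (chi Q x - chi P x) := fun x => by ring
    simp_rw [h1]
    have hsupp : Function.support (fun x => w x * (chi Q x - chi P x))
        ⊆ (({p, q} : Finset (ℤ × ℤ)) : Set (ℤ × ℤ)) := by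
      intro x hx
      have hx' : x ∈ Q ∆ P := support_chi_sub w Q P hx
      rw [symmDiff_comm, hset] at hx'
      simpa using hx'
    rw [finsum_eq_finset_sum_of_support_subset _ hsupp, Finset.sum_pair hpq]
    unfold chi
    rw [if_pos hpP, if_neg hpQ, if_pos hqQ, if_neg hqP]
    ring
  rw [key]
  exact hw v q hqT p hpT

lemma phi_coe (w : ℤ × ℤ → ℤ) (sA sR : Finset (ℤ × ℤ)) :
    phi w ↑sA ↑sR = ∑ x ∈ sA, w x - ∑ x ∈ sR, w x := by
  unfold phi
  have h1 : ∀ x, w x * (chi ↑sA x - chi ↑sR x) = w x * chi ↑sA x - w x * chi ↑sR x :=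
    fun x => by ring
  simp_rw [h1]
  rw [finsum_sub_distrib ((sA.finite_toSet).subset (support_chi w ↑sA))
    ((sR.finite_toSet).subset (support_chi w ↑sR))]
  congr 1
  · rw [finsum_eq_finset_sum_of_support_subset _ (support_chi w ↑sA)]
    refine Finset.sum_congr rfl fun x hx => ?_
    simp [chi, hx]
  · rw [finsum_eq_finset_sum_of_support_subset _ (support_chi w ↑sR)]
    refine Finset.sum_congr rfl fun x hx => ?_
    simp [chi, hx]

lemma phi_bound (w : ℤ × ℤ → ℤ)
    (hw : ∀ v : ℤ × ℤ, ∀ p ∈ tr v TriShape, ∀ q ∈ tr v TriShape, |w p - w q| ≤ 1)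
    (E₁ : Set (ℤ × ℤ)) (m : ℕ) (f : ℕ → Set (ℤ × ℤ)) (h0 : f 0 = E₁)
    (hstep : ∀ i < m, TriMove (f i) (f (i + 1))) :
    (f m ∆ E₁).Finite ∧ |phi w (f m) E₁| ≤ m := by
  induction m with
  | zero =>
    constructor
    · rw [h0, symmDiff_self]
      exact Set.finite_empty
    · rw [h0]
      have : phi w E₁ E₁ = 0 := by
        unfold phi
        simp
      simp [this]
  | succ k ih =>
    obtain ⟨hfin, hb⟩ := ih (fun i hi => hstep i (by omega))
    have hmove := hstep k (by omega)
    have hPQfin : (f k ∆ f (k + 1)).Finite := by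
      obtain ⟨v, _, _, hsub, _⟩ := hmove
      exact (tr_finite v).subset hsub
    have hfin' : (f (k + 1) ∆ E₁).Finite := by
      have h21 : (f (k + 1) ∆ f k).Finite := by rwa [symmDiff_comm]
      exact (h21.union hfin).subset (symmDiff_triangle _ _ _)
    refine ⟨hfin', ?_⟩
    have hstep1 := phi_move w hw hfin hfin' hmove
    have habs : |phi w (f (k + 1)) E₁| ≤ |phi w (f k) E₁| + 1 := by
      calc |phi w (f (k + 1)) E₁|
          = |phi w (f k) E₁ + (phi w (f (k + 1)) E₁ - phi w (f k) E₁)| := by ring_nf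
        _ ≤ |phi w (f k) E₁| + |phi w (f (k + 1)) E₁ - phi w (f k) E₁| := abs_add_le _ _
        _ ≤ |phi w (f k) E₁| + 1 := by linarith
    push_cast
    push_cast at hb
    linarith

lemma horiz_coe (n : ℕ) :
    horizEdge n = ↑((Finset.range n).image fun i : ℕ => ((i : ℤ), (0 : ℤ))) := by
  ext ⟨x, y⟩
  simp only [horizEdge, Set.mem_setOf_eq, Finset.coe_image, Set.mem_image, Finset.mem_coe,
    Finset.mem_range, Prod.mk.injEq]
  constructor
  · rintro ⟨h1, h2, rfl⟩
    exact ⟨x.toNat, by omega, by omega, rfl⟩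
  · rintro ⟨i, hi, rfl, rfl⟩
    refine ⟨by positivity, by exact_mod_cast hi, rfl⟩

lemma vert_coe (n : ℕ) :
    vertEdge n = ↑((Finset.range n).image fun i : ℕ => ((0 : ℤ), (i : ℤ))) := by
  ext ⟨x, y⟩
  simp only [vertEdge, Set.mem_setOf_eq, Finset.coe_image, Set.mem_image, Finset.mem_coe,
    Finset.mem_range, Prod.mk.injEq]
  constructor
  · rintro ⟨rfl, h1, h2⟩
    exact ⟨y.toNat, by omega, rfl, by omega⟩
  · rintro ⟨i, hi, rfl, rfl⟩
    refine ⟨rfl, by positivity, by exact_mod_cast hi⟩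

lemma diag_coe (n : ℕ) :
    diagEdge n = ↑((Finset.range n).image fun i : ℕ => ((i : ℤ), (n : ℤ) - 1 - (i : ℤ))) := by
  ext ⟨x, y⟩
  simp only [diagEdge, Set.mem_setOf_eq, Finset.coe_image, Set.mem_image, Finset.mem_coe,
    Finset.mem_range, Prod.mk.injEq]
  constructor
  · rintro ⟨h1, h2, h3⟩
    exact ⟨x.toNat, by omega, by omega, by omega⟩
  · rintro ⟨i, hi, rfl, rfl⟩
    refine ⟨by positivity, by omega, by ring⟩

lemma sum_img (n : ℕ) (g : ℕ → ℤ × ℤ) (hg : ∀ a ∈ Finset.range n, ∀ b ∈ Finset.range n,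
    g a = g b → a = b) (w : ℤ × ℤ → ℤ) :
    ∑ x ∈ (Finset.range n).image g, w x = ∑ i ∈ Finset.range n, w (g i) :=
  Finset.sum_image hg

lemma gauss (n : ℕ) : ∑ i ∈ Finset.range n, (i : ℤ) = ((n * (n - 1) / 2 : ℕ) : ℤ) := by
  rw [← Finset.sum_range_id]
  push_cast
  rfl

lemma sum_reflect (n : ℕ) :
    ∑ i ∈ Finset.range n, ((n : ℤ) - 1 - (i : ℤ)) = ∑ i ∈ Finset.range n, (i : ℤ) := by
  rw [← Finset.sum_range_reflect (fun j => (j : ℤ)) n]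
  refine Finset.sum_congr rfl fun i hi => ?_
  rw [Finset.mem_range] at hi
  omega

lemma hw_snd : ∀ v : ℤ × ℤ, ∀ p ∈ tr v TriShape, ∀ q ∈ tr v TriShape, |p.2 - q.2| ≤ 1 := by
  intro v p hp q hq
  simp only [tr, TriShape, Set.image_insert_eq, Set.image_singleton, Set.mem_insert_iff,
    Set.mem_singleton_iff] at hp hq
  rcases hp with rfl | rfl | rfl <;> rcases hq with rfl | rfl | rfl <;>
    · rw [abs_le]
      constructor <;> simp [Prod.snd_add] <;> linarith

lemma hw_fst : ∀ v : ℤ × ℤ, ∀ p ∈ tr v TriShape, ∀ q ∈ tr v TriShape, |p.1 - q.1| ≤ 1 := by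
  intro v p hp q hq
  simp only [tr, TriShape, Set.image_insert_eq, Set.image_singleton, Set.mem_insert_iff,
    Set.mem_singleton_iff] at hp hq
  rcases hp with rfl | rfl | rfl <;> rcases hq with rfl | rfl | rfl <;>
    · rw [abs_le]
      constructor <;> simp [Prod.fst_add] <;> linarith

lemma finishK (n m : ℕ) (a : ℤ) (ha : |a| ≤ (m : ℤ))
    (h : a = ((n * (n - 1) / 2 : ℕ) : ℤ) ∨ a = -((n * (n - 1) / 2 : ℕ) : ℤ)) :
    n * (n - 1) / 2 ≤ m := by
  rcases h with rfl | rfl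
  · rw [abs_of_nonneg (by positivity)] at ha
    exact_mod_cast ha
  · rw [abs_neg, abs_of_nonneg (by positivity)] at ha
    exact_mod_cast ha

/-- Transforming one edge of `T_n` into a different one requires at least
`n(n-1)/2` solitaire moves. -/
theorem edges_distance_lower_bound (n : ℕ) (E₁ E₂ : Set (ℤ × ℤ))
    (h₁ : E₁ ∈ ({horizEdge n, vertEdge n, diagEdge n} : Set (Set (ℤ × ℤ))))
    (h₂ : E₂ ∈ ({horizEdge n, vertEdge n, diagEdge n} : Set (Set (ℤ × ℤ))))
    (hne : E₁ ≠ E₂) (m : ℕ) (f : ℕ → Set (ℤ × ℤ))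
    (h0 : f 0 = E₁) (hm : f m = E₂)
    (hstep : ∀ i < m, TriMove (f i) (f (i + 1))) :
    n * (n - 1) / 2 ≤ m := by
  have main : ∀ w : ℤ × ℤ → ℤ,
      (∀ v : ℤ × ℤ, ∀ p ∈ tr v TriShape, ∀ q ∈ tr v TriShape, |w p - w q| ≤ 1) →
      |phi w E₂ E₁| ≤ (m : ℤ) := by
    intro w hw
    have h := (phi_bound w hw E₁ m f h0 hstep).2
    rwa [hm] at h
  have injH : ∀ a ∈ Finset.range n, ∀ b ∈ Finset.range n,
      (fun i : ℕ => ((i : ℤ), (0 : ℤ))) a = (fun i : ℕ => ((i : ℤ), (0 : ℤ))) b → a = b := by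
    intro a _ b _ h
    simp only [Prod.mk.injEq, Nat.cast_inj] at h
    exact h.1
  have injV : ∀ a ∈ Finset.range n, ∀ b ∈ Finset.range n,
      (fun i : ℕ => ((0 : ℤ), (i : ℤ))) a = (fun i : ℕ => ((0 : ℤ), (i : ℤ))) b → a = b := by
    intro a _ b _ h
    simp only [Prod.mk.injEq, Nat.cast_inj] at h
    exact h.2
  have injD : ∀ a ∈ Finset.range n, ∀ b ∈ Finset.range n,
      (fun i : ℕ => ((i : ℤ), (n : ℤ) - 1 - (i : ℤ))) a
        = (fun i : ℕ => ((i : ℤ), (n : ℤ) - 1 - (i : ℤ))) b → a = b := by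
    intro a _ b _ h
    simp only [Prod.mk.injEq, Nat.cast_inj] at h
    exact h.1
  simp only [Set.mem_insert_iff, Set.mem_singleton_iff] at h₁ h₂
  rcases h₁ with rfl | rfl | rfl <;> rcases h₂ with rfl | rfl | rfl
  · exact absurd rfl hne
  · -- horiz → vert, weight snd
    have h := main Prod.snd hw_snd
    rw [vert_coe, horiz_coe, phi_coe, sum_img n _ injV, sum_img n _ injH] at h
    simp only [Finset.sum_const_zero, sub_zero, gauss] at h
    exact finishK n m _ h (Or.inl rfl)
  · -- horiz → diag, weight snd
    have h := main Prod.snd hw_snd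
    rw [diag_coe, horiz_coe, phi_coe, sum_img n _ injD, sum_img n _ injH] at h
    simp only [Finset.sum_const_zero, sub_zero, sum_reflect, gauss] at h
    exact finishK n m _ h (Or.inl rfl)
  · -- vert → horiz
    have h := main Prod.snd hw_snd
    rw [horiz_coe, vert_coe, phi_coe, sum_img n _ injH, sum_img n _ injV] at h
    simp only [Finset.sum_const_zero, zero_sub, gauss] at h
    exact finishK n m _ h (Or.inr rfl)
  · exact absurd rfl hne
  · -- vert → diag, weight fst
    have h := main Prod.fst hw_fst
    rw [diag_coe, vert_coe, phi_coe, sum_img n _ injD, sum_img n _ injV] at h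
    simp only [Finset.sum_const_zero, sub_zero, gauss] at h
    exact finishK n m _ h (Or.inl rfl)
  · -- diag → horiz
    have h := main Prod.snd hw_snd
    rw [horiz_coe, diag_coe, phi_coe, sum_img n _ injH, sum_img n _ injD] at h
    simp only [Finset.sum_const_zero, zero_sub, sum_reflect, gauss] at h
    exact finishK n m _ h (Or.inr rfl)
  · -- diag → vert
    have h := main Prod.fst hw_fst
    rw [vert_coe, diag_coe, phi_coe, sum_img n _ injV, sum_img n _ injD] at h
    simp only [Finset.sum_const_zero, zero_sub, gauss] at h
    exact finishK n m _ h (Or.inr rfl)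
  · exact absurd rfl hne
end
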